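/- arXiv:2106.13826 — 2 statements merged into one kernel-verified Lean document; each statement's English description precedes it below -/
import Mathlib

section
/- In the category Graph^(L,≤) of labeled graphs over a complete lattice (L,≤), monomorphisms are stable under pushout: for every span B ←^b A →^c C in which c is a monomorphism, there exists a pushout B →^m D ←^n C of the span, and m is a monomorphism. -/
open CategoryTheory
open Classical

noncomputable section

/-- Labeled graphs over a label type `W`. -/
structure LGraph (W : Type) : Type 1 where
  V : Type
  E : Type
  src : E → V
  tgt : E → V
  lV : V → W
  lE : E → W

section Cat

variable {W : Type} [Preorder W]

/-- Label-nondecreasing graph premorphisms: the morphisms of the category `Graph^(L,≤)`. -/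
structure GLHom (G H : LGraph W) : Type where
  onV : G.V → H.V
  onE : G.E → H.E
  src_comm : ∀ e, H.src (onE e) = onV (G.src e)
  tgt_comm : ∀ e, H.tgt (onE e) = onV (G.tgt e)
  lV_le : ∀ v, G.lV v ≤ H.lV (onV v)
  lE_le : ∀ e, G.lE e ≤ H.lE (onE e)

theorem GLHom.ext' {G H : LGraph W} {f g : GLHom G H}
    (h1 : f.onV = g.onV) (h2 : f.onE = g.onE) : f = g := by
  cases f; cases g
  cases h1; cases h2
  rfl

/-- The category `Graph^(L,≤)` of labeled graphs over a preordered label set. -/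
instance : Category (LGraph W) where
  Hom G H := GLHom G H
  id G := { onV := id, onE := id, src_comm := fun _ => rfl, tgt_comm := fun _ => rfl,
            lV_le := fun _ => le_refl _, lE_le := fun _ => le_refl _ }
  comp f g :=
    { onV := g.onV ∘ f.onV
      onE := g.onE ∘ f.onE
      src_comm := fun e => by
        simp only [Function.comp_apply, g.src_comm, f.src_comm]
      tgt_comm := fun e => by
        simp only [Function.comp_apply, g.tgt_comm, f.tgt_comm]
      lV_le := fun v => le_trans (f.lV_le v) (g.lV_le _)
      lE_le := fun e => le_trans (f.lE_le e) (g.lE_le _) }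
  id_comp f := GLHom.ext' rfl rfl
  comp_id f := GLHom.ext' rfl rfl
  assoc f g h := GLHom.ext' rfl rfl

/-- Vertex map of a morphism. -/
abbrev homV {G H : LGraph W} (f : G ⟶ H) : G.V → H.V := GLHom.onV f

/-- Edge map of a morphism. -/
abbrev homE {G H : LGraph W} (f : G ⟶ H) : G.E → H.E := GLHom.onE f

end Cat

/-- A graph is finite if it has finitely many vertices and edges. -/
def FiniteG {W : Type} (G : LGraph W) : Prop := Finite G.V ∧ Finite G.E
/-- The flat lattice on a base label set `A`: a global minimum `⊥`, a global
maximum `⊤`, and all elements of `A` pairwise incomparable. -/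
inductive Flat (A : Type) : Type
  | bot : Flat A
  | el : A → Flat A
  | top : Flat A

namespace Flat

def le {A : Type} : Flat A → Flat A → Prop
  | bot, _ => True
  | _, top => True
  | el a, el b => a = b
  | _, _ => False

instance (A : Type) : Preorder (Flat A) where
  le := Flat.le
  le_refl a := by cases a <;> trivial
  le_trans a b c hab hbc := by
    cases a <;> cases b <;> cases c <;> simp_all [Flat.le]

theorem bot_le {A : Type} (a : Flat A) : (Flat.bot : Flat A) ≤ a := by
  show Flat.le Flat.bot a
  cases a <;> trivial

theorem le_top {A : Type} (a : Flat A) : a ≤ (Flat.top : Flat A) := by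
  show Flat.le a Flat.top
  cases a <;> trivial

theorem le_cases {A : Type} {a b : Flat A} (h : a = Flat.bot ∨ b = Flat.top) : a ≤ b := by
  rcases h with h | h
  · subst h; exact bot_le _
  · subst h; exact le_top _

end Flat

/-- The flat lattice `Σ°` induced by a signature `S` together with the
positive natural numbers (used as edge labels). -/
abbrev FlatL (S : Type) := Flat (S ⊕ ℕ+)
/-- First-order terms over a signature `S` with arity function `ar` and
variable set `X`. -/
inductive Term (S : Type) (ar : S → ℕ) (X : Type) : Type
  | var : X → Term S ar X
  | app : (f : S) → (Fin (ar f) → Term S ar X) → Term S ar X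

namespace Term

variable {S : Type} {ar : S → ℕ} {X : Type}

/-- The subterm of `t` at a position (a list of (0-based) child indices),
if the position exists in `t`. -/
def sub? : Term S ar X → List ℕ → Option (Term S ar X)
  | t, [] => some t
  | .var _, _ :: _ => none
  | .app f ts, i :: p => if h : i < ar f then sub? (ts ⟨i, h⟩) p else none

/-- The set of variables occurring in a term. -/
def vars (t : Term S ar X) : Set X := {x | ∃ p, t.sub? p = some (.var x)}

/-- A term is linear if every variable occurs at most once in it. -/
def Linear (t : Term S ar X) : Prop :=
  ∀ x p q, t.sub? p = some (.var x) → t.sub? q = some (.var x) → p = q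

/-- The head symbol of a term, if any. -/
def head? : Term S ar X → Option S
  | .var _ => none
  | .app f _ => some f

/-- The function symbol at position `p` of `t`, if any. -/
def symAt (t : Term S ar X) (p : List ℕ) : Option S := (t.sub? p).bind head?

theorem sub?_append (t : Term S ar X) (p q : List ℕ) :
    t.sub? (p ++ q) = (t.sub? p).bind (fun s => s.sub? q) := by
  induction p generalizing t with
  | nil => simp [sub?]
  | cons i p ih =>
    cases t with
    | var x => simp [sub?]
    | app f ts =>
      show sub? (.app f ts) (i :: (p ++ q)) = _
      simp only [sub?]
      by_cases h : i < ar f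
      · simp [h, ih]
      · simp [h]

theorem symAt_sub (t : Term S ar X) {p : List ℕ} {f : S} (h : t.symAt p = some f) :
    ∃ ts : Fin (ar f) → Term S ar X, t.sub? p = some (.app f ts) := by
  unfold symAt at h
  cases hs : t.sub? p with
  | none => rw [hs] at h; simp at h
  | some s =>
    rw [hs] at h
    cases s with
    | var x => simp [head?] at h
    | app g ts =>
      simp [head?] at h
      subst h
      exact ⟨ts, rfl⟩

theorem edge_sub?_isSome (t : Term S ar X) {p : List ℕ} {i : ℕ}
    (h : ∃ f, t.symAt p = some f ∧ i < ar f) :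
    ∃ s, t.sub? (p ++ [i]) = some s := by
  obtain ⟨f, hf, hi⟩ := h
  obtain ⟨ts, hts⟩ := t.symAt_sub hf
  refine ⟨ts ⟨i, hi⟩, ?_⟩
  rw [sub?_append, hts]
  simp [sub?, hi]

theorem edge_tgt_var (t : Term S ar X) {p : List ℕ} {i : ℕ}
    (h : ∃ f, t.symAt p = some f ∧ i < ar f)
    (hn : ¬ (t.symAt (p ++ [i])).isSome) :
    ∃ x, t.sub? (p ++ [i]) = some (.var x) := by
  obtain ⟨s, hs⟩ := t.edge_sub?_isSome h
  cases s with
  | var x => exact ⟨x, hs⟩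
  | app g ts => exact absurd (by simp [symAt, hs, head?]) hn

theorem root_var (t : Term S ar X) (h : ¬ (t.symAt []).isSome) :
    ∃ x, t.sub? [] = some (.var x) := by
  cases t with
  | var x => exact ⟨x, rfl⟩
  | app f ts => exact absurd (by simp [symAt, sub?, head?]) h

/-- Vertices of the term encoding: symbol vertices (named by their position)
and variable heads (named by their variable). -/
def encV (t : Term S ar X) : Type :=
  {p : List ℕ // (t.symAt p).isSome} ⊕ {x : X // x ∈ t.vars}

/-- Edges of the term encoding: pairs of a symbol position and a child index. -/
def encE (t : Term S ar X) : Type :=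
  {pi : List ℕ × ℕ // ∃ f, t.symAt pi.1 = some f ∧ pi.2 < ar f}

/-- Target of an edge of the term encoding. -/
noncomputable def encTgt (t : Term S ar X) (e : t.encE) : t.encV :=
  if h : (t.symAt (e.1.1 ++ [e.1.2])).isSome then Sum.inl ⟨e.1.1 ++ [e.1.2], h⟩
  else Sum.inr ⟨Classical.choose (t.edge_tgt_var e.2 h),
    ⟨e.1.1 ++ [e.1.2], Classical.choose_spec (t.edge_tgt_var e.2 h)⟩⟩

/-- The term encoding `t°` of a term `t` as a `Σ°`-labeled graph. -/
noncomputable def enc (t : Term S ar X) : LGraph (FlatL S) where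
  V := t.encV
  E := t.encE
  src e := Sum.inl ⟨e.1.1, by obtain ⟨f, hf, _⟩ := e.2; simp [hf]⟩
  tgt := t.encTgt
  lV v := match v with
    | .inl q => (t.symAt q.1).elim Flat.bot (fun f => Flat.el (Sum.inl f))
    | .inr _ => Flat.bot
  lE e := Flat.el (Sum.inr ⟨e.1.2 + 1, Nat.succ_pos _⟩)

/-- The root of the term encoding (the vertex at position `ε`). -/
noncomputable def encRoot (t : Term S ar X) : t.encV :=
  if h : (t.symAt []).isSome then Sum.inl ⟨[], h⟩
  else Sum.inr ⟨Classical.choose (t.root_var h), ⟨[], Classical.choose_spec (t.root_var h)⟩⟩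

/-- `t.encVertAt p v` says that `v` is the vertex at position `p` in the term
encoding `t°`. -/
def encVertAt (t : Term S ar X) (p : List ℕ) : t.encV → Prop
  | .inl q => q.1 = p
  | .inr x => t.sub? p = some (.var x.1)

/-- The set of variable heads of a term encoding. -/
def varHeads (t : Term S ar X) : Set t.encV := Set.range Sum.inr

/-- Applying a substitution to a term. -/
def subst (σ : X → Term S ar X) : Term S ar X → Term S ar X
  | .var x => σ x
  | .app f ts => .app f (fun i => subst σ (ts i))

end Term

/-- One-hole contexts over a signature. `app f i ts C` is the context
`f(ts 0, …, C, …, ts (n-1))` with `C` at argument position `i`. -/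
inductive Ctx (S : Type) (ar : S → ℕ) (X : Type) : Type
  | hole : Ctx S ar X
  | app : (f : S) → (i : Fin (ar f)) → (Fin (ar f) → Term S ar X) → Ctx S ar X → Ctx S ar X

namespace Ctx

variable {S : Type} {ar : S → ℕ} {X : Type}

/-- Replacing the hole of a context by a term. -/
def fill : Ctx S ar X → Term S ar X → Term S ar X
  | .hole, t => t
  | .app f i ts C, t => .app f (Function.update ts i (C.fill t))

/-- The position of the hole of a context. -/
def holePos : Ctx S ar X → List ℕ
  | .hole => []
  | .app _ i _ C => (i : ℕ) :: C.holePos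

end Ctx

/-- A term rewrite rule `lhs → rhs`: `lhs` is not a variable and all variables
of `rhs` occur in `lhs`. -/
structure TRSRule (S : Type) (ar : S → ℕ) (X : Type) : Type where
  lhs : Term S ar X
  rhs : Term S ar X
  lhs_not_var : ∀ x, lhs ≠ Term.var x
  var_cond : rhs.vars ⊆ lhs.vars

namespace TRSRule

variable {S : Type} {ar : S → ℕ} {X : Type}

/-- A rule is linear if both sides are linear terms. -/
def Linear (ρ : TRSRule S ar X) : Prop := ρ.lhs.Linear ∧ ρ.rhs.Linear

/-- The rewrite step relation generated by a single rule. -/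
def Step (ρ : TRSRule S ar X) (s t : Term S ar X) : Prop :=
  ∃ (C : Ctx S ar X) (σ : X → Term S ar X),
    s = C.fill (ρ.lhs.subst σ) ∧ t = C.fill (ρ.rhs.subst σ)

/-- The rewrite step relation of a rule at a fixed position `p`. -/
def StepAt (ρ : TRSRule S ar X) (p : List ℕ) (s t : Term S ar X) : Prop :=
  ∃ (C : Ctx S ar X) (σ : X → Term S ar X),
    C.holePos = p ∧ s = C.fill (ρ.lhs.subst σ) ∧ t = C.fill (ρ.rhs.subst σ)

end TRSRule

/-- The rewrite relation of a term rewriting system. -/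
def TStep {S : Type} {ar : S → ℕ} {X : Type} (Rs : Set (TRSRule S ar X))
    (s t : Term S ar X) : Prop :=
  ∃ ρ ∈ Rs, ρ.Step s t
section Closures

variable {A : Type}

/-- Upper context closure `C[G]` of a graph rooted at `r`: adds a `⊤`-labeled
context vertex with a `⊤`-labeled edge to the root and a `⊤`-labeled loop. -/
def upperCC (G : LGraph (Flat A)) (r : G.V) : LGraph (Flat A) where
  V := G.V ⊕ Unit
  E := G.E ⊕ Bool
  src e := match e with
    | .inl e => .inl (G.src e)
    | .inr _ => .inr ()
  tgt e := match e with
    | .inl e => .inl (G.tgt e)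
    | .inr true => .inl r
    | .inr false => .inr ()
  lV v := match v with
    | .inl v => G.lV v
    | .inr _ => Flat.top
  lE e := match e with
    | .inl e => G.lE e
    | .inr _ => Flat.top

/-- Lower context closure `G↓_Xs`: relabels every vertex in `Xs` to `⊤` and
adds for it a fresh `⊤`-labeled vertex `x'` with a `⊤`-labeled edge `x → x'`
and a `⊤`-labeled loop on `x'`. -/
noncomputable def lowerCC (G : LGraph (Flat A)) (Xs : Set G.V) : LGraph (Flat A) where
  V := G.V ⊕ Xs
  E := G.E ⊕ (Xs ⊕ Xs)
  src e := match e with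
    | .inl e => .inl (G.src e)
    | .inr (.inl x) => .inl x.1
    | .inr (.inr x) => .inr x
  tgt e := match e with
    | .inl e => .inl (G.tgt e)
    | .inr (.inl x) => .inr x
    | .inr (.inr x) => .inr x
  lV v := match v with
    | .inl v => if v ∈ Xs then Flat.top else G.lV v
    | .inr _ => Flat.top
  lE e := match e with
    | .inl e => G.lE e
    | .inr _ => Flat.top

/-- The context closure `C[G↓_Xs]` of a rooted graph. -/
noncomputable def ctxCC (G : LGraph (Flat A)) (r : G.V) (Xs : Set G.V) : LGraph (Flat A) :=
  upperCC (lowerCC G Xs) (Sum.inl r)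

theorem ctxCC_lV_inl (G : LGraph (Flat A)) (r : G.V) (Xs : Set G.V) (v : G.V) :
    (ctxCC G r Xs).lV (Sum.inl (Sum.inl v)) = if v ∈ Xs then Flat.top else G.lV v := rfl

/-- The typing morphism `G ↣ C[G↓_Xs]` (an inclusion). -/
noncomputable def tCC (G : LGraph (Flat A)) (r : G.V) (Xs : Set G.V) :
    GLHom G (ctxCC G r Xs) where
  onV v := Sum.inl (Sum.inl v)
  onE e := Sum.inl (Sum.inl e)
  src_comm e := rfl
  tgt_comm e := rfl
  lV_le v := by
    rw [ctxCC_lV_inl]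
    split
    · exact Flat.le_top _
    · exact le_refl _
  lE_le e := le_refl _

end Closures

/-- The interface graph `I(t)` of a term `t`: a discrete graph with
`⊥`-labeled vertices `Var(t) ∪ {ε}`. -/
def interfaceG {S : Type} {ar : S → ℕ} {X : Type} (t : Term S ar X) : LGraph (FlatL S) where
  V := {x : X // x ∈ t.vars} ⊕ Unit
  E := Empty
  src e := e.elim
  tgt e := e.elim
  lV _ := Flat.bot
  lE e := e.elim

/-- The variable vertices of an interface graph. -/
def interfaceVars {S : Type} {ar : S → ℕ} {X : Type} (t : Term S ar X) :
    Set (interfaceG t).V := Set.range Sum.inl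
/-- A PBPO⁺ rewrite rule. -/
structure PBPORule (W : Type) [Preorder W] : Type 1 where
  L : LGraph W
  K : LGraph W
  R : LGraph W
  L' : LGraph W
  K' : LGraph W
  l : K ⟶ L
  r : K ⟶ R
  l' : K' ⟶ L'
  tL : L ⟶ L'
  tK : K ⟶ K'

/-- A PBPO⁺ rewrite step `G_L ⇒_ρ^α G_R`, consisting of a monic match `m`, an
adherence morphism `α` making the match square a pullback, the pullback `G_K`
of `α` along `l'`, and the pushout `G_R` of `r` along `u`. -/
structure RewriteStep {W : Type} [Preorder W] (ρ : PBPORule W) (G₀ G₁ : LGraph W) :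
    Type 1 where
  m : ρ.L ⟶ G₀
  mono_m : Mono m
  α : G₀ ⟶ ρ.L'
  matchPB : IsPullback (𝟙 ρ.L) m ρ.tL α
  GK : LGraph W
  gL : GK ⟶ G₀
  u' : GK ⟶ ρ.K'
  pbK : IsPullback gL u' α ρ.l'
  u : ρ.K ⟶ GK
  u_u' : u ≫ u' = ρ.tK
  u_gL : u ≫ gL = ρ.l ≫ m
  w : ρ.R ⟶ G₁
  gR : GK ⟶ G₁
  po : IsPushout ρ.r u w gR

/-- `G ⇒_ρ H` : there exists a PBPO⁺ rewrite step from `G` to `H` via `ρ`. -/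
def PBPOStep {W : Type} [Preorder W] (ρ : PBPORule W) (G H : LGraph W) : Prop :=
  Nonempty (RewriteStep ρ G H)

/-- A match `m` establishes a match (of the rule `ρ`) if it is monic and some
adherence morphism makes the match square a pullback. -/
def EstablishesMatch {W : Type} [Preorder W] (ρ : PBPORule W) {G : LGraph W}
    (m : ρ.L ⟶ G) : Prop :=
  Mono m ∧ ∃ α : G ⟶ ρ.L', m ≫ α = ρ.tL ∧ IsPullback (𝟙 ρ.L) m ρ.tL α

section RuleEnc

variable {S : Type} {ar : S → ℕ} {X : Type}

/-- The morphism `l : K → L` of the rule encoding. -/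
noncomputable def encKtoL (ρ : TRSRule S ar X) : GLHom (interfaceG ρ.rhs) ρ.lhs.enc where
  onV v := match v with
    | .inl x => Sum.inr ⟨x.1, ρ.var_cond x.2⟩
    | .inr _ => ρ.lhs.encRoot
  onE e := e.elim
  src_comm e := e.elim
  tgt_comm e := e.elim
  lV_le v := by cases v <;> exact Flat.bot_le _
  lE_le e := e.elim

/-- The morphism `r : K → R` of the rule encoding. -/
noncomputable def encKtoR (ρ : TRSRule S ar X) : GLHom (interfaceG ρ.rhs) ρ.rhs.enc where
  onV v := match v with
    | .inl x => Sum.inr x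
    | .inr _ => ρ.rhs.encRoot
  onE e := e.elim
  src_comm e := e.elim
  tgt_comm e := e.elim
  lV_le v := by cases v <;> exact Flat.bot_le _
  lE_le e := e.elim

/-- Mapping the primed (lower-closure) vertices of `K'` to those of `L'`. -/
noncomputable def mapPrime (ρ : TRSRule S ar X) :
    ↥(interfaceVars ρ.rhs) → ↥(ρ.lhs.varHeads) :=
  fun x' => match x' with
  | ⟨.inl x, _⟩ => ⟨Sum.inr ⟨x.1, ρ.var_cond x.2⟩, ⟨⟨x.1, ρ.var_cond x.2⟩, rfl⟩⟩
  | ⟨.inr u, h⟩ => absurd h (by rintro ⟨y, hy⟩; cases hy)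

/-- The morphism `l' : K' → L'` of the rule encoding. -/
noncomputable def encl' (ρ : TRSRule S ar X) :
    GLHom (ctxCC (interfaceG ρ.rhs) (Sum.inr ()) (interfaceVars ρ.rhs))
      (ctxCC ρ.lhs.enc ρ.lhs.encRoot ρ.lhs.varHeads) where
  onV v := match v with
    | .inl (.inl (.inl x)) => .inl (.inl (Sum.inr ⟨x.1, ρ.var_cond x.2⟩))
    | .inl (.inl (.inr _)) => .inl (.inl ρ.lhs.encRoot)
    | .inl (.inr x') => .inl (.inr (mapPrime ρ x'))
    | .inr u => .inr u
  onE e := match e with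
    | .inl (.inl e) => e.elim
    | .inl (.inr (.inl x')) => .inl (.inr (.inl (mapPrime ρ x')))
    | .inl (.inr (.inr x')) => .inl (.inr (.inr (mapPrime ρ x')))
    | .inr b => .inr b
  src_comm := by
    rintro ((e | (⟨(x | u), hv⟩ | ⟨(x | u), hv⟩)) | b)
    · exact e.elim
    · rfl
    · exact absurd hv (by rintro ⟨y, hy⟩; cases hy)
    · rfl
    · exact absurd hv (by rintro ⟨y, hy⟩; cases hy)
    · rfl
  tgt_comm := by
    rintro ((e | (x' | x')) | b)
    · exact e.elim
    · rfl
    · rfl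
    · cases b <;> rfl
  lV_le := by
    rintro (((x | u) | x') | c)
    · refine Flat.le_cases (Or.inr ?_)
      refine (ctxCC_lV_inl _ _ _ _).trans ?_
      rw [if_pos ⟨⟨x.1, ρ.var_cond x.2⟩, rfl⟩]
    · refine Flat.le_cases (Or.inl ?_)
      refine (ctxCC_lV_inl _ _ _ _).trans ?_
      rw [if_neg (by rintro ⟨y, hy⟩; cases hy)]
      rfl
    · exact Flat.le_cases (Or.inr rfl)
    · exact Flat.le_cases (Or.inr rfl)
  lE_le := by
    rintro ((e | (x' | x')) | b)
    · exact e.elim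
    · exact Flat.le_cases (Or.inr rfl)
    · exact Flat.le_cases (Or.inr rfl)
    · exact Flat.le_cases (Or.inr rfl)

/-- The rule encoding `ρ°` of a term rewrite rule `ρ : l → r` as a PBPO⁺ rule. -/
noncomputable def ruleEnc (ρ : TRSRule S ar X) : PBPORule (FlatL S) where
  L := ρ.lhs.enc
  K := interfaceG ρ.rhs
  R := ρ.rhs.enc
  L' := ctxCC ρ.lhs.enc ρ.lhs.encRoot ρ.lhs.varHeads
  K' := ctxCC (interfaceG ρ.rhs) (Sum.inr ()) (interfaceVars ρ.rhs)
  l := encKtoL ρ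
  r := encKtoR ρ
  l' := encl' ρ
  tL := tCC ρ.lhs.enc ρ.lhs.encRoot ρ.lhs.varHeads
  tK := tCC (interfaceG ρ.rhs) (Sum.inr ()) (interfaceVars ρ.rhs)

/-- The rewrite relation of an encoded term rewriting system `R°`. -/
def SysStep (Rs : Set (TRSRule S ar X)) (G H : LGraph (FlatL S)) : Prop :=
  ∃ ρ ∈ Rs, PBPOStep (ruleEnc ρ) G H

end RuleEnc
section Cycles

variable {W : Type}

/-- `IsUPath G u es v`: `es` is an undirected path from `u` to `v` in `G`. -/
def IsUPath (G : LGraph W) : G.V → List G.E → G.V → Prop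
  | u, [], v => u = v
  | u, e :: es, v =>
      (G.src e = u ∧ IsUPath G (G.tgt e) es v) ∨ (G.tgt e = u ∧ IsUPath G (G.src e) es v)

/-- An undirected cycle at `v`: a nonempty undirected path from `v` to `v`
with pairwise distinct edges. -/
def IsUCycle (G : LGraph W) (v : G.V) (es : List G.E) : Prop :=
  es ≠ [] ∧ es.Nodup ∧ IsUPath G v es v

/-- A cycle edge is an edge lying on some undirected cycle. -/
def CycleEdge (G : LGraph W) (e : G.E) : Prop :=
  ∃ v es, IsUCycle G v es ∧ e ∈ es

/-- A graph is cycle-free if it contains no undirected cycle. -/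
def CycleFree (G : LGraph W) : Prop := ¬ ∃ v es, IsUCycle G v es

/-- `[G]`: the graph obtained from `G` by deleting all cycle edges. -/
def dropCycles (G : LGraph W) : LGraph W where
  V := G.V
  E := {e : G.E // ¬ CycleEdge G e}
  src e := G.src e.1
  tgt e := G.tgt e.1
  lV := G.lV
  lE e := G.lE e.1

end Cycles

section Zones

variable {S : Type}

/-- A vertex is in-well-formed if it has at most one incoming edge. -/
def InWF (G : LGraph (FlatL S)) (v : G.V) : Prop :=
  ∀ e e' : G.E, G.tgt e = v → G.tgt e' = v → e = e'

/-- A vertex is out-well-formed if its label is a function symbol `f` and it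
has exactly `ar f` outgoing edges, labeled `1, …, ar f`. -/
def OutWF (G : LGraph (FlatL S)) (ar : S → ℕ) (v : G.V) : Prop :=
  ∃ f : S, G.lV v = Flat.el (Sum.inl f) ∧
    ∃ φ : Fin (ar f) ≃ {e : G.E // G.src e = v},
      ∀ i, G.lE (φ i).1 = Flat.el (Sum.inr ⟨(i : ℕ) + 1, Nat.succ_pos _⟩)

/-- A vertex is good if it is out-well-formed and all its children are
in-well-formed; otherwise it is bad. -/
def Good (G : LGraph (FlatL S)) (ar : S → ℕ) (v : G.V) : Prop :=
  OutWF G ar v ∧ ∀ e : G.E, G.src e = v → InWF G (G.tgt e)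

/-- The edges included in a zone by the zoning algorithm are exactly the edges
with a good source. -/
def ZoneEdge (G : LGraph (FlatL S)) (ar : S → ℕ) (e : G.E) : Prop :=
  Good G ar (G.src e)

/-- One directed step along an edge included in a zone. -/
def ZStep (G : LGraph (FlatL S)) (ar : S → ℕ) (u v : G.V) : Prop :=
  ∃ e, ZoneEdge G ar e ∧ G.src e = u ∧ G.tgt e = v

/-- Two vertices lie in the same zone iff they are connected by edges included
in zones (equivalence closure of `ZStep`). -/
def SameZone (G : LGraph (FlatL S)) (ar : S → ℕ) : G.V → G.V → Prop :=
  Relation.EqvGen (ZStep G ar)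

/-- A root of a zone: a vertex with no parent inside its zone. -/
def IsZoneRoot (G : LGraph (FlatL S)) (ar : S → ℕ) (r : G.V) : Prop :=
  ¬ ∃ e, ZoneEdge G ar e ∧ G.tgt e = r

/-- A directed path along zone edges. -/
def IsZPath (G : LGraph (FlatL S)) (ar : S → ℕ) : G.V → List G.E → G.V → Prop
  | u, [], v => u = v
  | u, e :: es, v => ZoneEdge G ar e ∧ G.src e = u ∧ IsZPath G ar (G.tgt e) es v

/-- The zone of `v₀`, as a subgraph of `G`, with every bad vertex relabeled
with `⊥`. -/
noncomputable def zoneTermGraph (G : LGraph (FlatL S)) (ar : S → ℕ) (v₀ : G.V) :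
    LGraph (FlatL S) where
  V := {u : G.V // SameZone G ar u v₀}
  E := {e : G.E // ZoneEdge G ar e ∧ SameZone G ar (G.src e) v₀}
  src e := ⟨G.src e.1, e.2.2⟩
  tgt e := ⟨G.tgt e.1,
    Relation.EqvGen.trans _ _ _
      (Relation.EqvGen.symm _ _ (Relation.EqvGen.rel _ _ ⟨e.1, e.2.1, rfl, rfl⟩)) e.2.2⟩
  lV u := if Good G ar u.1 then G.lV u.1 else Flat.bot
  lE e := G.lE e.1

end Zones

section Relabel

variable {W : Type}

/-- `G` with the label of vertex `v` changed to `l`. -/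
noncomputable def relabelV (G : LGraph W) (v : G.V) (l : W) : LGraph W :=
  { G with lV := Function.update G.lV v l }

/-- `G` with the label of every vertex in `s` changed to `l`. -/
noncomputable def relabelSet (G : LGraph W) (s : Set G.V) (l : W) : LGraph W :=
  { G with lV := fun u => if u ∈ s then l else G.lV u }

end Relabel

/-! A monomorphism of labeled graphs is injective on vertices and on edges: test it against the
one-vertex and the one-edge graph labeled `⊥`. The pushout of a span `B ← A → C` is the pushout
of sets on vertices and on edges, each vertex and edge labeled by the supremum of the labels of its
preimages in `B ⊕ C` (this is where completeness of `L` is used). In sets, the pushout of an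
injection is an injection, so the first pushout injection is injective on vertices and on edges,
hence a monomorphism. -/

section Mono

variable {W : Type} [Preorder W] {G H : LGraph W}

theorem mono_of_injective (f : G ⟶ H) (hV : Function.Injective (homV f))
    (hE : Function.Injective (homE f)) : Mono f :=
  ⟨fun _ _ h => GLHom.ext' (funext fun v => hV (congrArg (homV · v) h))
    (funext fun e => hE (congrArg (homE · e) h))⟩

variable [OrderBot W]

namespace LGraph

variable (W) in
def point : LGraph W where
  V := Unit
  E := Empty
  src := Empty.elim
  tgt := Empty.elim
  lV _ := ⊥
  lE := Empty.elim

variable (W) in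
def arrow : LGraph W where
  V := Bool
  E := Unit
  src _ := false
  tgt _ := true
  lV _ := ⊥
  lE _ := ⊥

def pickVertex (v : G.V) : point W ⟶ G where
  onV _ := v
  onE := Empty.elim
  src_comm e := e.elim
  tgt_comm e := e.elim
  lV_le _ := bot_le
  lE_le e := e.elim

def pickEdge (e : G.E) : arrow W ⟶ G where
  onV x := cond x (G.tgt e) (G.src e)
  onE _ := e
  src_comm _ := rfl
  tgt_comm _ := rfl
  lV_le _ := bot_le
  lE_le _ := bot_le

end LGraph

theorem injective_homV_of_mono (f : G ⟶ H) [Mono f] : Function.Injective (homV f) := by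
  intro v v' h
  have : LGraph.pickVertex v ≫ f = LGraph.pickVertex v' ≫ f :=
    GLHom.ext' (funext fun _ => h) (funext fun e => e.elim)
  exact congrArg (homV · ()) (cancel_mono f |>.1 this)

theorem injective_homE_of_mono (f : G ⟶ H) [Mono f] : Function.Injective (homE f) := by
  intro e e' h
  have hV : homV (LGraph.pickEdge e ≫ f) = homV (LGraph.pickEdge e' ≫ f) := by
    funext x
    cases x
    · exact (GLHom.src_comm f e).symm.trans ((congrArg H.src h).trans (GLHom.src_comm f e'))
    · exact (GLHom.tgt_comm f e).symm.trans ((congrArg H.tgt h).trans (GLHom.tgt_comm f e'))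
  have : LGraph.pickEdge e ≫ f = LGraph.pickEdge e' ≫ f := GLHom.ext' hV (funext fun _ => h)
  exact congrArg (homE · ()) (cancel_mono f |>.1 this)

end Mono

def CategoryTheory.Limits.Types.Pushout.map {S X₁ X₂ T Y₁ Y₂ : Type} {f : S → X₁} {g : S → X₂}
    {f' : T → Y₁} {g' : T → Y₂} (ψ : S → T) (φ₁ : X₁ → Y₁) (φ₂ : X₂ → Y₂)
    (h₁ : ∀ s, φ₁ (f s) = f' (ψ s)) (h₂ : ∀ s, φ₂ (g s) = g' (ψ s)) :
    Types.Pushout (↾f) (↾g) → Types.Pushout (↾f') (↾g') :=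
  Quot.lift (fun x => Quot.mk _ (Sum.map φ₁ φ₂ x)) <| by
    rintro _ _ ⟨s⟩
    change Quot.mk _ (Sum.inl (φ₁ (f s))) = Quot.mk _ (Sum.inr (φ₂ (g s)))
    rw [h₁, h₂]
    exact Quot.sound (.inl_inr (f := ↾f') (g := ↾g') (ψ s))

section Pushout

open Limits

variable {L : Type} [CompleteLattice L]

def fiberSup {X Y : Type} (q : X → Y) (l : X → L) (y : Y) : L := ⨆ (x) (_ : q x = y), l x

theorem le_fiberSup {X Y : Type} (q : X → Y) (l : X → L) (x : X) : l x ≤ fiberSup q l (q x) :=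
  le_iSup₂_of_le x rfl le_rfl

theorem fiberSup_le {X Y : Type} {q : X → Y} {l : X → L} {m : Y → L}
    (h : ∀ x, l x ≤ m (q x)) (y : Y) : fiberSup q l y ≤ m y :=
  iSup₂_le fun x hx => hx ▸ h x

variable {A B C : LGraph L} (b : A ⟶ B) (c : A ⟶ C)

def pushoutGraph : LGraph L where
  V := Types.Pushout (↾homV b) (↾homV c)
  E := Types.Pushout (↾homE b) (↾homE c)
  src := Types.Pushout.map A.src B.src C.src (GLHom.src_comm b) (GLHom.src_comm c)
  tgt := Types.Pushout.map A.tgt B.tgt C.tgt (GLHom.tgt_comm b) (GLHom.tgt_comm c)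
  lV := fiberSup (Quot.mk _) (Sum.elim B.lV C.lV)
  lE := fiberSup (Quot.mk _) (Sum.elim B.lE C.lE)

namespace pushoutGraph

def inl : B ⟶ pushoutGraph b c where
  onV v := Quot.mk _ (Sum.inl v)
  onE e := Quot.mk _ (Sum.inl e)
  src_comm _ := rfl
  tgt_comm _ := rfl
  lV_le v := le_fiberSup _ (Sum.elim B.lV C.lV) (Sum.inl v)
  lE_le e := le_fiberSup _ (Sum.elim B.lE C.lE) (Sum.inl e)

def inr : C ⟶ pushoutGraph b c where
  onV v := Quot.mk _ (Sum.inr v)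
  onE e := Quot.mk _ (Sum.inr e)
  src_comm _ := rfl
  tgt_comm _ := rfl
  lV_le v := le_fiberSup _ (Sum.elim B.lV C.lV) (Sum.inr v)
  lE_le e := le_fiberSup _ (Sum.elim B.lE C.lE) (Sum.inr e)

theorem condition : b ≫ inl b c = c ≫ inr b c :=
  GLHom.ext' (funext fun a => Quot.sound (.inl_inr a)) (funext fun e => Quot.sound (.inl_inr e))

variable {b c}

def desc {P : LGraph L} (h : B ⟶ P) (k : C ⟶ P) (w : b ≫ h = c ≫ k) :
    pushoutGraph b c ⟶ P where
  onV := Quot.lift (Sum.elim (homV h) (homV k)) (by rintro _ _ ⟨a⟩; exact congrArg (homV · a) w)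
  onE := Quot.lift (Sum.elim (homE h) (homE k)) (by rintro _ _ ⟨e⟩; exact congrArg (homE · e) w)
  src_comm := by
    rintro ⟨e | e⟩
    exacts [GLHom.src_comm h e, GLHom.src_comm k e]
  tgt_comm := by
    rintro ⟨e | e⟩
    exacts [GLHom.tgt_comm h e, GLHom.tgt_comm k e]
  lV_le := fiberSup_le <| by
    rintro (v | v)
    exacts [GLHom.lV_le h v, GLHom.lV_le k v]
  lE_le := fiberSup_le <| by
    rintro (e | e)
    exacts [GLHom.lE_le h e, GLHom.lE_le k e]

theorem hom_ext {P : LGraph L} {f g : pushoutGraph b c ⟶ P}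
    (hl : inl b c ≫ f = inl b c ≫ g) (hr : inr b c ≫ f = inr b c ≫ g) : f = g := by
  refine GLHom.ext' (funext ?_) (funext ?_)
  · rintro ⟨v | v⟩
    exacts [congrArg (homV · v) hl, congrArg (homV · v) hr]
  · rintro ⟨e | e⟩
    exacts [congrArg (homE · e) hl, congrArg (homE · e) hr]

variable (b c)

theorem isPushout : IsPushout b c (inl b c) (inr b c) :=
  .of_isColimit' ⟨condition b c⟩ <|
    PushoutCocone.IsColimit.mk _ (fun s => desc s.inl s.inr s.condition) (fun _ => rfl)
      (fun _ => rfl) fun _ _ hl hr => hom_ext hl hr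

theorem mono_inl [Mono c] : Mono (inl b c) := by
  have : Mono (↾(homV c)) := (mono_iff_injective _).2 (injective_homV_of_mono c)
  have : Mono (↾(homE c)) := (mono_iff_injective _).2 (injective_homE_of_mono c)
  exact mono_of_injective _ ((mono_iff_injective (Types.Pushout.inl _ _)).1 inferInstance)
    ((mono_iff_injective (Types.Pushout.inl _ _)).1 inferInstance)

end pushoutGraph

end Pushout

/-- In the category `Graph^(L,≤)` of labeled graphs over a complete
lattice `(L,≤)`, monomorphisms are stable under pushout: for every span
`B ←b A →c C` in which `c` is a monomorphism, there exists a pushout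
`B →m D ←n C` of the span, and `m` is a monomorphism. -/
theorem statement_0 {L : Type} [CompleteLattice L] {A B C : LGraph L}
    (b : A ⟶ B) (c : A ⟶ C) (hc : Mono c) :
    ∃ (D : LGraph L) (m : B ⟶ D) (n : C ⟶ D), IsPushout b c m n ∧ Mono m :=
  ⟨_, _, _, pushoutGraph.isPushout b c, pushoutGraph.mono_inl b c⟩
end
end

section
/- If a zone Z of a finite Σ°-labeled graph contains no directed cycle among its included edges, then Z is a directed tree: Z has a unique root (a vertex of Z with no parent inside Z), and for every vertex v of Z there is a unique directed path from the root to v using only edges included in Z. -/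
open CategoryTheory
open Classical

noncomputable section

/-!
A zone edge has a good source, so its target is in-well-formed: inside a zone every vertex has
at most one parent. Walking backwards from a vertex is therefore forced, which makes directed
paths from a root unique, and makes the set of vertices reachable from a root `r` closed under
zone steps in both directions, hence equal to the whole zone; a second root reachable from `r`
must be `r` itself. Finiteness and acyclicity are needed only to find one root, as a minimal
ancestor of `v₀`.
-/

namespace Relation

theorem exists_minimal_reflTransGen_of_finite {α : Type*} {R : α → α → Prop} {s : Set α}
    (hs : s.Finite) (hpred : ∀ a b, R a b → b ∈ s → a ∈ s)
    (hacyc : ∀ a ∈ s, ¬ TransGen R a a) {b : α} (hb : b ∈ s) :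
    ∃ a, ReflTransGen R a b ∧ ∀ c, ¬ R c a := by
  have : Finite s := hs.to_subtype
  let Rs : s → s → Prop := fun x y => R x y
  have : Std.Irrefl (TransGen Rs) :=
    ⟨fun x hx => hacyc x x.2 (hx.lift Subtype.val fun _ _ h => h)⟩
  have hwf : WellFounded Rs :=
    Subrelation.wf TransGen.single (Finite.wellFounded_of_trans_of_irrefl (TransGen Rs))
  obtain ⟨a, hab, hmin⟩ := hwf.has_min {x | ReflTransGen R x b} ⟨⟨b, hb⟩, .refl⟩
  exact ⟨a, hab, fun c hca => hmin ⟨c, hpred c a hca a.2⟩ (hab.head hca) hca⟩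

theorem EqvGen.iff_of_forall_rel_iff {α : Type*} {r : α → α → Prop} {p : α → Prop}
    (h : ∀ a b, r a b → (p a ↔ p b)) {a b : α} (hab : EqvGen r a b) : p a ↔ p b :=
  have : IsEquiv α fun a b => (p a ↔ p b) :=
    (show Equivalence fun a b => (p a ↔ p b) from ⟨fun _ => Iff.rfl, Iff.symm, Iff.trans⟩).isEquiv
  EqvGen.eqvGen_le h a b hab

end Relation

section ZonePaths

variable {S : Type} {ar : S → ℕ} {G : LGraph (FlatL S)}

theorem ZoneEdge.eq_of_tgt_eq {e e' : G.E} (he : ZoneEdge G ar e) (h : G.tgt e' = G.tgt e) :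
    e' = e :=
  he.2 e rfl e' e h rfl

theorem isZoneRoot_iff {r : G.V} : IsZoneRoot G ar r ↔ ∀ u, ¬ ZStep G ar u r := by
  simp only [IsZoneRoot, ZStep, not_exists, not_and]
  exact ⟨fun h _ e he _ => h e he, fun h e he => h _ e he rfl⟩

theorem SameZone.of_reflTransGen {u v : G.V} (h : Relation.ReflTransGen (ZStep G ar) u v) :
    SameZone G ar u v :=
  Relation.EqvGen.reflTransGen_le_eqvGen _ _ _ h

theorem isZPath_append_singleton {u w : G.V} {es : List G.E} {e : G.E} :
    IsZPath G ar u (es ++ [e]) w ↔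
      IsZPath G ar u es (G.src e) ∧ ZoneEdge G ar e ∧ G.tgt e = w := by
  induction es generalizing u with
  | nil => simp only [List.nil_append, IsZPath]; grind
  | cons f es ih => simp only [List.cons_append, IsZPath, ih, and_assoc]

theorem IsZoneRoot.eq_nil_of_isZPath {u r : G.V} {es : List G.E} (hr : IsZoneRoot G ar r)
    (hes : IsZPath G ar u es r) : es = [] := by
  rcases es.eq_nil_or_concat' with rfl | ⟨es, e, rfl⟩
  · rfl
  · obtain ⟨-, he, hte⟩ := isZPath_append_singleton.1 hes
    exact absurd ⟨e, he, hte⟩ hr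

theorem IsZoneRoot.isZPath_unique {r v : G.V} {es es' : List G.E} (hr : IsZoneRoot G ar r)
    (hes : IsZPath G ar r es v) (hes' : IsZPath G ar r es' v) : es = es' := by
  induction es using List.reverseRecOn generalizing v es' with
  | nil =>
    obtain rfl : r = v := hes
    exact (hr.eq_nil_of_isZPath hes').symm
  | append_singleton es e ih =>
    obtain ⟨hpre, he, rfl⟩ := isZPath_append_singleton.1 hes
    rcases es'.eq_nil_or_concat' with rfl | ⟨es', e', rfl⟩
    · obtain rfl : r = G.tgt e := hes'
      exact absurd ⟨e, he, rfl⟩ hr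
    · obtain ⟨hpre', -, hte'⟩ := isZPath_append_singleton.1 hes'
      obtain rfl := he.eq_of_tgt_eq hte'
      rw [ih hpre hpre']

/-- Since the target of a zone edge has no other incoming edge, a path from a root to it
must end with that edge. -/
theorem IsZoneRoot.exists_isZPath_iff_of_zStep {r u w : G.V} (hr : IsZoneRoot G ar r)
    (huw : ZStep G ar u w) :
    (∃ es, IsZPath G ar r es u) ↔ ∃ es, IsZPath G ar r es w := by
  obtain ⟨e, he, rfl, rfl⟩ := huw
  refine ⟨fun ⟨es, hes⟩ => ⟨es ++ [e], isZPath_append_singleton.2 ⟨hes, he, rfl⟩⟩,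
    fun ⟨es, hes⟩ => ?_⟩
  rcases es.eq_nil_or_concat' with rfl | ⟨es, f, rfl⟩
  · obtain rfl : r = G.tgt e := hes
    exact absurd ⟨e, he, rfl⟩ hr
  · obtain ⟨hpre, -, htf⟩ := isZPath_append_singleton.1 hes
    obtain rfl := he.eq_of_tgt_eq htf
    exact ⟨es, hpre⟩

theorem IsZoneRoot.exists_isZPath_of_sameZone {r v : G.V} (hr : IsZoneRoot G ar r)
    (hrv : SameZone G ar r v) : ∃ es, IsZPath G ar r es v :=
  (Relation.EqvGen.iff_of_forall_rel_iff (p := fun v => ∃ es, IsZPath G ar r es v)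
    (fun _ _ => hr.exists_isZPath_iff_of_zStep) hrv).1 ⟨[], rfl⟩

theorem exists_isZoneRoot_reflTransGen {v₀ : G.V} (hfin : Finite G.V)
    (hacyc : ∀ u, SameZone G ar u v₀ → ¬ Relation.TransGen (ZStep G ar) u u) :
    ∃ r, Relation.ReflTransGen (ZStep G ar) r v₀ ∧ IsZoneRoot G ar r := by
  simp only [isZoneRoot_iff]
  exact Relation.exists_minimal_reflTransGen_of_finite (s := {u | SameZone G ar u v₀})
    (Set.toFinite _) (fun _ _ h hb => (Relation.EqvGen.rel _ _ h).trans _ _ _ hb) hacyc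
    (Relation.EqvGen.refl v₀)

end ZonePaths

/-- If a zone `Z` (here: the zone of a vertex `v₀`) of a finite
`Σ°`-labeled graph contains no directed cycle among its included edges, then
`Z` is a directed tree: it has a unique root, and every vertex of `Z` is
reached from the root by a unique directed path of edges included in `Z`. -/
theorem statement_13 {S : Type} (ar : S → ℕ) (G : LGraph (FlatL S))
    (hfin : FiniteG G) (v₀ : G.V)
    (hacyc : ¬ ∃ u, SameZone G ar u v₀ ∧ Relation.TransGen (ZStep G ar) u u) :
    ∃ r : G.V, (SameZone G ar r v₀ ∧ IsZoneRoot G ar r) ∧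
      (∀ r', SameZone G ar r' v₀ → IsZoneRoot G ar r' → r' = r) ∧
      (∀ v, SameZone G ar v v₀ → ∃! es : List G.E, IsZPath G ar r es v) := by
  obtain ⟨r, hrv₀, hr⟩ :=
    exists_isZoneRoot_reflTransGen hfin.1 fun u hu hcyc => hacyc ⟨u, hu, hcyc⟩
  have hrZ : SameZone G ar r v₀ := .of_reflTransGen hrv₀
  have hreach : ∀ v, SameZone G ar v v₀ → ∃ es, IsZPath G ar r es v := fun v hv =>
    hr.exists_isZPath_of_sameZone (hrZ.trans _ _ _ (hv.symm _ _))
  refine ⟨r, ⟨hrZ, hr⟩, fun r' hr'Z hr' => ?_, fun v hv => ?_⟩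
  · obtain ⟨es, hes⟩ := hreach r' hr'Z
    obtain rfl := hr'.eq_nil_of_isZPath hes
    exact hes.symm
  · obtain ⟨es, hes⟩ := hreach v hv
    exact ⟨es, hes, fun es' hes' => hr.isZPath_unique hes' hes⟩
end
end
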